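/- Let F be a field of characteristic 2. Then M_2(F) is not strongly Lie solvable: no term of the series δ^(0)(A) = A, δ^(n+1)(A) = [δ^(n)(A), δ^(n)(A)]·A vanishes. -/

import Mathlib

/-!
In characteristic 2 the commutator of the matrix units `E₀₁` and `E₁₀` is
`E₀₀ - E₁₁ = E₀₀ + E₁₁ = 1`. An algebra containing two elements whose commutator is a unit is
generated, as an ideal, by that commutator, so every term of its strong Lie derived series is the
whole algebra.
-/

/-- The strong Lie derived series of a unital associative algebra `A` over a field `F`:
`δ⁽⁰⁾(A) = A`, and `δ⁽ⁿ⁺¹⁾(A)` is the two-sided ideal generated by the products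
`(xy - yx)·w` with `x, y ∈ δ⁽ⁿ⁾(A)` and `w ∈ A` (realized as the linear span of all
`a·((xy - yx)·w)·b`). -/
def strongLieDerivedSeries (F A : Type*) [Field F] [Ring A] [Algebra F A] :
    ℕ → Submodule F A
  | 0 => ⊤
  | n + 1 => Submodule.span F
      {z : A | ∃ x ∈ strongLieDerivedSeries F A n, ∃ y ∈ strongLieDerivedSeries F A n,
        ∃ w a b : A, z = a * ((x * y - y * x) * w) * b}

theorem strongLieDerivedSeries_eq_top_of_isUnit_commutator {F A : Type*} [Field F] [Ring A]
    [Algebra F A] {x y : A} (hxy : IsUnit (x * y - y * x)) (n : ℕ) :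
    strongLieDerivedSeries F A n = ⊤ := by
  induction n with
  | zero => rfl
  | succ n ih =>
    refine eq_top_iff.mpr fun z _ => Submodule.subset_span ?_
    obtain ⟨u, hu⟩ := hxy
    refine ⟨x, ih ▸ Submodule.mem_top, y, ih ▸ Submodule.mem_top, ↑u⁻¹ * z, 1, 1, ?_⟩
    rw [← hu, one_mul, mul_one, ← mul_assoc, Units.mul_inv, one_mul]

theorem Matrix.single_zero_one_commutator_single_one_zero {R : Type*} [Ring R] [CharP R 2] :
    (single 0 1 1 : Matrix (Fin 2) (Fin 2) R) * single 1 0 1 - single 1 0 1 * single 0 1 1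
      = 1 := by
  rw [single_mul_single_same, single_mul_single_same, one_mul, CharTwo.sub_eq_add]
  ext i j
  fin_cases i <;> fin_cases j <;> simp

/-- Over a field of characteristic 2, the algebra `M₂(F)` is **not** strongly
Lie solvable: no term of the strong Lie derived series vanishes. -/
theorem m2_not_strongly_lie_solvable (F : Type*) [Field F] [CharP F 2] :
    ∀ n : ℕ, strongLieDerivedSeries F (Matrix (Fin 2) (Fin 2) F) n ≠ ⊥ := by
  intro n
  have hunit : IsUnit ((Matrix.single 0 1 1 : Matrix (Fin 2) (Fin 2) F) * Matrix.single 1 0 1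
      - Matrix.single 1 0 1 * Matrix.single 0 1 1) := by
    rw [Matrix.single_zero_one_commutator_single_one_zero]
    exact isUnit_one
  rw [strongLieDerivedSeries_eq_top_of_isUnit_commutator hunit n]
  exact top_ne_bot
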